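/- arXiv:1805.07859 — 2 statements merged into one kernel-verified Lean document; each statement's English description precedes it below -/
import Mathlib

section
/- Derivatives and warped wave equation of f/ρ̄ (Proposition 3.7). Fix ε ∈ ℝ and an integer n ≥ 1. For (u,v) ∈ ℝ² set f := −uv and ρ̄ := (v − u) − 2εuv, and on the open set {ρ̄ ≠ 0} let h := f/ρ̄. Then at every point of {ρ̄ ≠ 0}: ∂_u h = −v²/ρ̄² and ∂_v h = u²/ρ̄²; and with the radial ε-warped wave operator □̄ one has □̄h = ((n−1)/(2ρ̄))·(1 − 2εf/ρ̄) − (n−3)·f/ρ̄³. -/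
noncomputable section

/-- Partial derivative in the first null coordinate `u`. -/
def pu (h : ℝ → ℝ → ℝ) (u v : ℝ) : ℝ := deriv (fun s => h s v) u

/-- Partial derivative in the second null coordinate `v`. -/
def pv (h : ℝ → ℝ → ℝ) (u v : ℝ) : ℝ := deriv (fun s => h u s) v

/-- The `ε`-warped radius `ρ̄ = (v − u) − 2εuv`. -/
def rhoBar (ε u v : ℝ) : ℝ := (v - u) - 2 * ε * u * v

/-- The radial `ε`-warped wave operator
`□̄h = −∂_u∂_v h − ((n−1)/(2ρ̄))·((1 − 2εu)∂_u h − (1 + 2εv)∂_v h)`. -/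
def warpedBox (ε : ℝ) (n : ℕ) (h : ℝ → ℝ → ℝ) (u v : ℝ) : ℝ :=
  -(pu (fun a b => pv h a b) u v) -
    ((n : ℝ) - 1) / (2 * rhoBar ε u v) *
      ((1 - 2 * ε * u) * pu h u v - (1 + 2 * ε * v) * pv h u v)

/-! Since `∂_uρ̄ = -(1 + 2εv)` and `∂_vρ̄ = 1 - 2εu`, the quotient rule for `f/ρ̄ = -uv/ρ̄`
collapses through `ρ̄ + u(1 + 2εv) = v` and `ρ̄ - v(1 - 2εu) = -u`. The mixed derivative is then
`∂_u(u²/ρ̄²) = 2uv/ρ̄³`, computed on a neighbourhood where `ρ̄ ≠ 0`, and the wave equation is the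
identity `(1 - 2εu)v² + (1 + 2εv)u² = (v - u)ρ̄ + 2uv` combined with `ρ̄ + 2εuv = v - u`. -/

section

variable (ε : ℝ)

theorem rhoBar_add_mul (u v : ℝ) : rhoBar ε u v + u * (1 + 2 * ε * v) = v := by
  unfold rhoBar; ring

theorem rhoBar_sub_mul (u v : ℝ) : rhoBar ε u v - v * (1 - 2 * ε * u) = -u := by
  unfold rhoBar; ring

theorem rhoBar_add_two_mul_mul (u v : ℝ) : rhoBar ε u v + 2 * ε * u * v = v - u := by
  unfold rhoBar; ring

theorem sq_mul_add_sq_mul_eq_rhoBar (u v : ℝ) :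
    v ^ 2 * (1 - 2 * ε * u) + u ^ 2 * (1 + 2 * ε * v) = (v - u) * rhoBar ε u v + 2 * u * v := by
  unfold rhoBar; ring

theorem hasDerivAt_rhoBar_fst (u v : ℝ) :
    HasDerivAt (rhoBar ε · v) (-(1 + 2 * ε * v)) u :=
  (((hasDerivAt_const u v).sub (hasDerivAt_id u)).sub
    (((hasDerivAt_id u).const_mul (2 * ε)).mul_const v)).congr_deriv (by ring)

theorem hasDerivAt_rhoBar_snd (u v : ℝ) :
    HasDerivAt (rhoBar ε u ·) (1 - 2 * ε * u) v :=
  (((hasDerivAt_id v).sub (hasDerivAt_const v u)).sub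
    ((hasDerivAt_id v).const_mul (2 * ε * u))).congr_deriv (by ring)

variable {u v : ℝ}

theorem hasDerivAt_neg_mul_div_rhoBar_fst (hρ : rhoBar ε u v ≠ 0) :
    HasDerivAt (fun s => -(s * v) / rhoBar ε s v) (-(v ^ 2) / rhoBar ε u v ^ 2) u := by
  refine ((hasDerivAt_mul_const v).fun_neg.fun_div (hasDerivAt_rhoBar_fst ε u v) hρ).congr_deriv ?_
  congr 1
  linear_combination (-v) * rhoBar_add_mul ε u v

theorem hasDerivAt_neg_mul_div_rhoBar_snd (hρ : rhoBar ε u v ≠ 0) :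
    HasDerivAt (fun s => -(u * s) / rhoBar ε u s) (u ^ 2 / rhoBar ε u v ^ 2) v := by
  refine ((hasDerivAt_const_mul u).fun_neg.fun_div (hasDerivAt_rhoBar_snd ε u v) hρ).congr_deriv ?_
  congr 1
  linear_combination (-u) * rhoBar_sub_mul ε u v

theorem hasDerivAt_pv_neg_mul_div_rhoBar_fst (hρ : rhoBar ε u v ≠ 0) :
    HasDerivAt (fun s => pv (fun a b => -(a * b) / rhoBar ε a b) s v)
      (2 * u * v / rhoBar ε u v ^ 3) u := by
  have hquot : HasDerivAt (fun s => s ^ 2 / rhoBar ε s v ^ 2) (2 * u * v / rhoBar ε u v ^ 3) u := by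
    refine ((hasDerivAt_pow 2 u).fun_div ((hasDerivAt_rhoBar_fst ε u v).fun_pow 2)
      (pow_ne_zero 2 hρ)).congr_deriv ?_
    field_simp
    norm_num
    linear_combination (2 * u * rhoBar ε u v) * rhoBar_add_mul ε u v
  refine hquot.congr_of_eventuallyEq ?_
  filter_upwards [(hasDerivAt_rhoBar_fst ε u v).continuousAt.eventually_ne hρ] with s hs
  exact (hasDerivAt_neg_mul_div_rhoBar_snd ε hs).deriv

end

theorem f_over_rho_derivatives_general (ε : ℝ) (n : ℕ) (u v : ℝ)
    (hρ : rhoBar ε u v ≠ 0) :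
    pu (fun a b => -(a * b) / rhoBar ε a b) u v = -(v ^ 2) / (rhoBar ε u v) ^ 2 ∧
    pv (fun a b => -(a * b) / rhoBar ε a b) u v = u ^ 2 / (rhoBar ε u v) ^ 2 ∧
    warpedBox ε n (fun a b => -(a * b) / rhoBar ε a b) u v =
      ((n : ℝ) - 1) / (2 * rhoBar ε u v) * (1 - 2 * ε * (-(u * v)) / rhoBar ε u v) -
        ((n : ℝ) - 3) * (-(u * v)) / (rhoBar ε u v) ^ 3 := by
  have hu : pu (fun a b => -(a * b) / rhoBar ε a b) u v = -(v ^ 2) / rhoBar ε u v ^ 2 :=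
    (hasDerivAt_neg_mul_div_rhoBar_fst ε hρ).deriv
  have hv : pv (fun a b => -(a * b) / rhoBar ε a b) u v = u ^ 2 / rhoBar ε u v ^ 2 :=
    (hasDerivAt_neg_mul_div_rhoBar_snd ε hρ).deriv
  have huv : pu (fun a b => pv (fun a b => -(a * b) / rhoBar ε a b) a b) u v =
      2 * u * v / rhoBar ε u v ^ 3 :=
    (hasDerivAt_pv_neg_mul_div_rhoBar_fst ε hρ).deriv
  refine ⟨hu, hv, ?_⟩
  rw [warpedBox, hu, hv, huv]
  field_simp
  linear_combination ((n : ℝ) - 1) * sq_mul_add_sq_mul_eq_rhoBar ε u v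
    - ((n : ℝ) - 1) * rhoBar ε u v * rhoBar_add_two_mul_mul ε u v

/-- **Proposition 3.7 (derivatives and warped wave equation of `f/ρ̄`).** -/
theorem f_over_rho_derivatives (ε : ℝ) (n : ℕ) (hn : 1 ≤ n) (u v : ℝ)
    (hρ : rhoBar ε u v ≠ 0) :
    pu (fun a b => -(a * b) / rhoBar ε a b) u v = -(v ^ 2) / (rhoBar ε u v) ^ 2 ∧
    pv (fun a b => -(a * b) / rhoBar ε a b) u v = u ^ 2 / (rhoBar ε u v) ^ 2 ∧
    warpedBox ε n (fun a b => -(a * b) / rhoBar ε a b) u v =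
      ((n : ℝ) - 1) / (2 * rhoBar ε u v) * (1 - 2 * ε * (-(u * v)) / rhoBar ε u v) -
        ((n : ℝ) - 3) * (-(u * v)) / (rhoBar ε u v) ^ 3 :=
  f_over_rho_derivatives_general ε n u v hρ
end
end

section
/- Conformal identities for the warping map (Proposition 3.12). Fix ε ∈ ℝ and (u,v) ∈ ℝ² with 1 + εu ≠ 0 and 1 − εv ≠ 0, and set ξ := (1 + εu)(1 − εv), ū := u/(1 + εu), v̄ := v/(1 − εv). Then: (i) −ū·v̄ = ξ^{−1}·(−uv) (the hyperbolic function transforms as f ∘ Φ̄ = ξ^{−1}·f); (ii) (v̄ − ū) − 2ε·ū·v̄ = ξ^{−1}·(v − u) (the warped radius transforms as ρ̄ ∘ Φ̄ = ξ^{−1}·r); (iii) the derivative of u ↦ u/(1 + εu) at u equals (1 + εu)^{−2}, the derivative of v ↦ v/(1 − εv) at v equals (1 − εv)^{−2}, and hence their product equals ξ^{−2}; together with (ii) squared, ((v̄ − ū) − 2ε·ū·v̄)² = ξ^{−2}·(v − u)², these identities express that the map Φ̄(u,v,ω) := (ū, v̄, ω) pulls the warped metric ḡ = −4 dū dv̄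 + ρ̄² γ̊ back to ξ^{−2}·(−4 du dv + r² γ̊) = ξ^{−2}·g, i.e. Φ̄ is a conformal isometry with conformal factor ξ^{−2}. -/
section Field

variable {K : Type*} [Field K]

def hyperbolicFn (u v : K) : K := -(u * v)

def warpedRadius (ε u v : K) : K := (v - u) - 2 * ε * u * v

theorem hyperbolicFn_div_div (ε u v : K) :
    hyperbolicFn (u / (1 + ε * u)) (v / (1 - ε * v)) =
      ((1 + ε * u) * (1 - ε * v))⁻¹ * hyperbolicFn u v := by
  rw [hyperbolicFn, hyperbolicFn, div_mul_div_comm, div_eq_inv_mul, mul_neg]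

-- Over the common denominator `ξ`, the numerator is `v (1 + εu) - u (1 - εv) - 2εuv = v - u`.
theorem warpedRadius_div_div {ε u v : K} (hu : 1 + ε * u ≠ 0) (hv : 1 - ε * v ≠ 0) :
    warpedRadius ε (u / (1 + ε * u)) (v / (1 - ε * v)) =
      ((1 + ε * u) * (1 - ε * v))⁻¹ * (v - u) := by
  rw [warpedRadius, eq_inv_mul_iff_mul_eq₀ (mul_ne_zero hu hv)]
  field_simp
  ring

end Field

section Deriv

variable {𝕜 : Type*} [NontriviallyNormedField 𝕜] {c x : 𝕜}

theorem hasDerivAt_div_one_add_mul (h : 1 + c * x ≠ 0) :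
    HasDerivAt (fun s => s / (1 + c * s)) ((1 + c * x) ^ 2)⁻¹ x := by
  have hden : HasDerivAt (fun s => 1 + c * s) c x := by
    simpa using ((hasDerivAt_id x).const_mul c).const_add 1
  refine ((hasDerivAt_id' x).div hden h).congr_deriv ?_
  rw [one_mul, mul_comm x c, add_sub_cancel_right, one_div]

theorem hasDerivAt_div_one_sub_mul (h : 1 - c * x ≠ 0) :
    HasDerivAt (fun s => s / (1 - c * s)) ((1 - c * x) ^ 2)⁻¹ x := by
  simp only [sub_eq_add_neg, ← neg_mul] at h ⊢
  exact hasDerivAt_div_one_add_mul h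

end Deriv

/-- **Proposition 3.12 (conformal identities for the warping map `Φ̄`).**
With `ξ := (1+εu)(1−εv)`, `ū := u/(1+εu)`, `v̄ := v/(1−εv)`:
(i) `f ∘ Φ̄ = ξ⁻¹ f`; (ii) `ρ̄ ∘ Φ̄ = ξ⁻¹ r`; (iii) the null-coordinate derivatives of the
map are `(1+εu)⁻²` and `(1−εv)⁻²`, with product `ξ⁻²`, and `(ρ̄ ∘ Φ̄)² = ξ⁻² r²`,
expressing that `Φ̄` pulls `ḡ` back to `ξ⁻² g`. -/
theorem warping_map_conformal_identities (ε u v : ℝ)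
    (h1 : 1 + ε * u ≠ 0) (h2 : 1 - ε * v ≠ 0) :
    -- (i) the hyperbolic function transforms conformally
    (-(u / (1 + ε * u) * (v / (1 - ε * v))) =
      ((1 + ε * u) * (1 - ε * v))⁻¹ * (-(u * v))) ∧
    -- (ii) the warped radius transforms conformally
    ((v / (1 - ε * v) - u / (1 + ε * u)) -
        2 * ε * (u / (1 + ε * u)) * (v / (1 - ε * v)) =
      ((1 + ε * u) * (1 - ε * v))⁻¹ * (v - u)) ∧
    -- (iii) derivatives of the null-coordinate reparametrizations
    deriv (fun s => s / (1 + ε * s)) u = ((1 + ε * u) ^ 2)⁻¹ ∧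
    deriv (fun s => s / (1 - ε * s)) v = ((1 - ε * v) ^ 2)⁻¹ ∧
    deriv (fun s => s / (1 + ε * s)) u * deriv (fun s => s / (1 - ε * s)) v =
      (((1 + ε * u) * (1 - ε * v)) ^ 2)⁻¹ ∧
    ((v / (1 - ε * v) - u / (1 + ε * u)) -
        2 * ε * (u / (1 + ε * u)) * (v / (1 - ε * v))) ^ 2 =
      (((1 + ε * u) * (1 - ε * v)) ^ 2)⁻¹ * (v - u) ^ 2 := by
  have hρ := warpedRadius_div_div h1 h2
  have hū := (hasDerivAt_div_one_add_mul h1).deriv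
  have hv' := (hasDerivAt_div_one_sub_mul h2).deriv
  refine ⟨hyperbolicFn_div_div ε u v, hρ, hū, hv', ?_, (congrArg (· ^ 2) hρ).trans ?_⟩
  · rw [hū, hv', mul_pow, mul_inv]
  · rw [mul_pow, inv_pow]
end
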